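/- arXiv:1603.02020 — 8 statements merged into one kernel-verified Lean document; each statement's English description precedes it below -/
import Mathlib

section
/- Let f : ℕ₀^d → K be a function which admits a representation f(k) = Σ_{j=1}^{M} a_j x_j^k for all k ∈ ℕ₀^d, where a_1,…,a_M ∈ K are nonzero and x_1,…,x_M ∈ K^d are pairwise distinct, and which also admits a representation f(k) = Σ_{i=1}^{M'} b_i y_i^k for all k ∈ ℕ₀^d, where b_1,…,b_{M'} ∈ K are nonzero and y_1,…,y_{M'} ∈ K^d are pairwise distinct. Then M = M' and there is a permutation σ of {1,…,M} such that y_{σ(j)} = x_j and b_{σ(j)} = a_j for all j. In other words, the sparsity M, the coefficients, and the parameters of a d-variate exponential sum are uniquely determined. -/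
open Finset

/-- Linear independence of multivariate geometric sequences: if a finite linear
combination of the functions `k ↦ s ^ k` (for `s` in a finite set of parameter
vectors) vanishes identically, then all coefficients vanish. -/
lemma exp_indep {K : Type*} [Field K] {d : ℕ} (S : Finset (Fin d → K))
    (c : (Fin d → K) → K)
    (h : ∀ k : Fin d → ℕ, ∑ s ∈ S, c s * ∏ i, s i ^ k i = 0) :
    ∀ s₀ ∈ S, c s₀ = 0 := by
  classical
  intro s₀ hs₀
  set F : (Fin d → K) → (Fin d → K) → K :=
    fun t s => if h0 : ∃ i, s₀ i ≠ t i then s h0.choose - t h0.choose else 1 with hF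
  have key : ∀ T : Finset (Fin d → K), ∀ k : Fin d → ℕ,
      ∑ s ∈ S, c s * (∏ t ∈ T, F t s) * ∏ i, s i ^ k i = 0 := by
    intro T
    induction T using Finset.induction_on with
    | empty => intro k; simpa using h k
    | @insert t T ht ih =>
      intro k
      by_cases h0 : ∃ i, s₀ i ≠ t i
      · set i0 := h0.choose with hi0
        have e1 := ih (fun i => k i + (if i = i0 then 1 else 0))
        have e2 := ih k
        have step : ∑ s ∈ S, c s * (∏ t' ∈ insert t T, F t' s) * ∏ i, s i ^ k i
            = (∑ s ∈ S, c s * (∏ t' ∈ T, F t' s) *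
                ∏ i, s i ^ (k i + if i = i0 then 1 else 0))
              - t i0 * ∑ s ∈ S, c s * (∏ t' ∈ T, F t' s) * ∏ i, s i ^ k i := by
          rw [Finset.mul_sum, ← Finset.sum_sub_distrib]
          refine Finset.sum_congr rfl fun s hs => ?_
          rw [Finset.prod_insert ht]
          have hprod : ∏ i, s i ^ (k i + if i = i0 then 1 else 0)
              = s i0 * ∏ i, s i ^ k i := by
            simp only [pow_add, Finset.prod_mul_distrib, pow_ite, pow_one, pow_zero]
            rw [Finset.prod_ite_eq' Finset.univ i0 (fun i => s i)]
            simp [mul_comm]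
          rw [hprod]
          have hFt : F t s = s i0 - t i0 := by rw [hF]; exact dif_pos h0
          rw [hFt]; ring
        rw [step, e1, e2]; ring
      · have hFt : ∀ s, F t s = 1 := fun s => by rw [hF]; exact dif_neg h0
        have : ∑ s ∈ S, c s * (∏ t' ∈ insert t T, F t' s) * ∏ i, s i ^ k i
            = ∑ s ∈ S, c s * (∏ t' ∈ T, F t' s) * ∏ i, s i ^ k i := by
          refine Finset.sum_congr rfl fun s hs => ?_
          rw [Finset.prod_insert ht, hFt, one_mul]
        rw [this]; exact ih k
  have final := key (S.erase s₀) (fun _ => 0)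
  simp only [pow_zero, Finset.prod_const_one, mul_one] at final
  have hsplit : ∑ s ∈ S, c s * ∏ t ∈ S.erase s₀, F t s
      = c s₀ * ∏ t ∈ S.erase s₀, F t s₀ := by
    refine Finset.sum_eq_single_of_mem s₀ hs₀ fun s hs hne => ?_
    have hmem : s ∈ S.erase s₀ := Finset.mem_erase.mpr ⟨hne, hs⟩
    have hFss : F s s = 0 := by
      have hex : ∃ i, s₀ i ≠ s i := by
        by_contra hc
        push_neg at hc
        exact hne (funext fun i => (hc i).symm)
      rw [hF]
      simp only [dif_pos hex, sub_self]
    have hp0 : ∏ t ∈ S.erase s₀, F t s = 0 :=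
      Finset.prod_eq_zero (f := fun t => F t s) hmem hFss
    rw [hp0, mul_zero]
  rw [hsplit] at final
  have hne : ∏ t ∈ S.erase s₀, F t s₀ ≠ 0 := by
    refine Finset.prod_ne_zero_iff.mpr fun t htm => ?_
    have htne : t ≠ s₀ := (Finset.mem_erase.mp htm).1
    have hex : ∃ i, s₀ i ≠ t i := by
      by_contra hc
      push_neg at hc
      exact htne (funext fun i => (hc i).symm)
    rw [hF]
    simp only [dif_pos hex]
    exact sub_ne_zero_of_ne hex.choose_spec
  exact (mul_eq_zero.mp final).resolve_right hne

/-- **Uniqueness of the representation of a multivariate exponential sum.**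
If `f : ℕ₀^d → K` admits two representations `f k = ∑ j, a j * x j ^ k` and
`f k = ∑ i, b i * y i ^ k` with nonzero coefficients and pairwise distinct parameters,
then the number of terms agrees and the parameters/coefficients agree up to a permutation. -/
theorem exponential_sum_representation_unique
    {K : Type*} [Field K] {d : ℕ} {M M' : ℕ} (hM : 0 < M) (hM' : 0 < M')
    (a : Fin M → K) (ha : ∀ j, a j ≠ 0)
    (x : Fin M → Fin d → K) (hx : Function.Injective x)
    (b : Fin M' → K) (hb : ∀ i, b i ≠ 0)
    (y : Fin M' → Fin d → K) (hy : Function.Injective y)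
    (f : (Fin d → ℕ) → K)
    (hfa : ∀ k : Fin d → ℕ, f k = ∑ j, a j * ∏ i, x j i ^ k i)
    (hfb : ∀ k : Fin d → ℕ, f k = ∑ j, b j * ∏ i, y j i ^ k i) :
    M = M' ∧ ∃ σ : Fin M ≃ Fin M', ∀ j, y (σ j) = x j ∧ b (σ j) = a j := by
  classical
  set A : (Fin d → K) → K :=
    fun s => if h : ∃ j, x j = s then a h.choose else 0 with hA
  set B : (Fin d → K) → K :=
    fun s => if h : ∃ i, y i = s then b h.choose else 0 with hB
  set S : Finset (Fin d → K) :=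
    (Finset.image x Finset.univ) ∪ (Finset.image y Finset.univ) with hS
  have hAx : ∀ j, A (x j) = a j := by
    intro j
    have h : ∃ j', x j' = x j := ⟨j, rfl⟩
    rw [hA]
    simp only [dif_pos h]
    congr 1
    exact hx h.choose_spec
  have hBy : ∀ i, B (y i) = b i := by
    intro i
    have h : ∃ i', y i' = y i := ⟨i, rfl⟩
    rw [hB]
    simp only [dif_pos h]
    congr 1
    exact hy h.choose_spec
  have hsumA : ∀ k : Fin d → ℕ, ∑ s ∈ S, A s * ∏ i, s i ^ k i = f k := by
    intro k
    rw [hfa]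
    rw [← Finset.sum_subset (Finset.subset_union_left :
      Finset.image x Finset.univ ⊆ S)]
    · rw [Finset.sum_image (fun j _ j' _ h => hx h)]
      exact Finset.sum_congr rfl fun j _ => by rw [hAx]
    · intro s hsS hs
      have hA0 : A s = 0 := by
        rw [hA]
        refine dif_neg ?_
        rintro ⟨j, rfl⟩
        exact hs (Finset.mem_image_of_mem x (Finset.mem_univ j))
      rw [hA0, zero_mul]
  have hsumB : ∀ k : Fin d → ℕ, ∑ s ∈ S, B s * ∏ i, s i ^ k i = f k := by
    intro k
    rw [hfb]
    rw [← Finset.sum_subset (Finset.subset_union_right :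
      Finset.image y Finset.univ ⊆ S)]
    · rw [Finset.sum_image (fun i _ i' _ h => hy h)]
      exact Finset.sum_congr rfl fun i _ => by rw [hBy]
    · intro s hsS hs
      have hB0 : B s = 0 := by
        rw [hB]
        refine dif_neg ?_
        rintro ⟨i, rfl⟩
        exact hs (Finset.mem_image_of_mem y (Finset.mem_univ i))
      rw [hB0, zero_mul]
  have hzero : ∀ k : Fin d → ℕ, ∑ s ∈ S, (A s - B s) * ∏ i, s i ^ k i = 0 := by
    intro k
    have : ∑ s ∈ S, (A s - B s) * ∏ i, s i ^ k i
        = (∑ s ∈ S, A s * ∏ i, s i ^ k i) - ∑ s ∈ S, B s * ∏ i, s i ^ k i := by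
      rw [← Finset.sum_sub_distrib]
      exact Finset.sum_congr rfl fun s _ => by ring
    rw [this, hsumA, hsumB, sub_self]
  have hc : ∀ s ∈ S, A s - B s = 0 := exp_indep S _ hzero
  have hσ : ∀ j, ∃ i, y i = x j ∧ b i = a j := by
    intro j
    have h1 : A (x j) - B (x j) = 0 :=
      hc _ (Finset.mem_union_left _ (Finset.mem_image_of_mem x (Finset.mem_univ j)))
    rw [hAx, sub_eq_zero] at h1
    by_cases h : ∃ i, y i = x j
    · refine ⟨h.choose, h.choose_spec, ?_⟩
      have hb' : B (x j) = b h.choose := by rw [hB]; exact dif_pos h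
      rw [hb'] at h1; exact h1.symm
    · exfalso
      have hb0 : B (x j) = 0 := by rw [hB]; exact dif_neg h
      rw [hb0] at h1
      exact ha j h1
  have hτ : ∀ i, ∃ j, x j = y i := by
    intro i
    have h1 : A (y i) - B (y i) = 0 :=
      hc _ (Finset.mem_union_right _ (Finset.mem_image_of_mem y (Finset.mem_univ i)))
    rw [hBy, sub_eq_zero] at h1
    by_cases h : ∃ j, x j = y i
    · exact h
    · exfalso
      have ha0 : A (y i) = 0 := by rw [hA]; exact dif_neg h
      rw [ha0] at h1
      exact hb i h1.symm
  set σ' : Fin M → Fin M' := fun j => (hσ j).choose with hσ'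
  have hyσ : ∀ j, y (σ' j) = x j := fun j => (hσ j).choose_spec.1
  have hbσ : ∀ j, b (σ' j) = a j := fun j => (hσ j).choose_spec.2
  have hσinj : Function.Injective σ' := by
    intro j j' hjj'
    apply hx
    rw [← hyσ j, ← hyσ j', hjj']
  set τ' : Fin M' → Fin M := fun i => (hτ i).choose with hτ'
  have hxτ : ∀ i, x (τ' i) = y i := fun i => (hτ i).choose_spec
  have hτinj : Function.Injective τ' := by
    intro i i' hii'
    apply hy
    rw [← hxτ i, ← hxτ i', hii']
  have hMM' : M = M' := by
    have h1 := Fintype.card_le_of_injective σ' hσinj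
    have h2 := Fintype.card_le_of_injective τ' hτinj
    simp only [Fintype.card_fin] at h1 h2
    omega
  refine ⟨hMM', Equiv.ofBijective σ'
    ((Fintype.bijective_iff_injective_and_card σ').mpr
      ⟨hσinj, by simp [hMM']⟩), fun j => ?_⟩
  simp only [Equiv.ofBijective_apply]
  exact ⟨hyσ j, hbσ j⟩
end

section
/- Let ≤ be a degree compatible term order on the monoid of d-variate terms, let Ω ⊂ K^d be a finite set, and let n ∈ ℕ₀ be such that the evaluation homomorphism A_n^Ω : Π_n → K^Ω, p ↦ (p(x))_{x∈Ω}, is surjective. Then every term in the normal set N_≤(I(Ω)) of the vanishing ideal of Ω has total degree at most n, i.e., N_≤(I(Ω)) ⊂ Π_n. -/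
/-!
If a term `X^t` of degree `> n` were in the normal set, interpolate it on `Ω` by some `p` of
degree `≤ n`. Then `X^t - p` vanishes on `Ω`, and every other term of it has degree `≤ n < deg t`,
so by degree compatibility `t` is its leading term: `t` would be a leading term of `I(Ω)`.
-/

/-- `t` is the leading term (exponent vector) of the polynomial `p` with respect to
the term order `le`: `t` lies in the support of `p` and dominates every term of `p`. -/
def IsLeadingTerm {K : Type*} [CommSemiring K] {d : ℕ}
    (le : (Fin d →₀ ℕ) → (Fin d →₀ ℕ) → Prop)
    (p : MvPolynomial (Fin d) K) (t : Fin d →₀ ℕ) : Prop :=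
  t ∈ p.support ∧ ∀ s ∈ p.support, le s t

open MvPolynomial

theorem isLeadingTerm_monomial_sub {R : Type*} [CommRing R] {d : ℕ}
    {le : (Fin d →₀ ℕ) → (Fin d →₀ ℕ) → Prop} (htotal : Std.Total le)
    (hdeg : ∀ t₁ t₂, le t₁ t₂ → t₁.degree ≤ t₂.degree)
    {p : MvPolynomial (Fin d) R} {t : Fin d →₀ ℕ} {c : R} (hc : c ≠ 0)
    (hp : p.totalDegree < t.degree) :
    IsLeadingTerm le (monomial t c - p) t := by
  classical
  refine ⟨?_, fun s hs => ?_⟩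
  · rwa [mem_support_iff, coeff_sub, coeff_monomial, if_pos rfl,
      coeff_eq_zero_of_totalDegree_lt hp, sub_zero]
  rcases Finset.mem_union.mp (support_sub _ _ _ hs) with hs | hs
  · rw [Finset.mem_singleton.mp (support_monomial_subset hs)]
    exact (htotal.total t t).elim id id
  · exact (htotal.total s t).resolve_right fun hts =>
      ((hdeg t s hts).trans (le_totalDegree hs)).not_gt hp

theorem normal_set_subset_Pi_n_general
    {K : Type*} [Field K] {d : ℕ}
    (le : (Fin d →₀ ℕ) → (Fin d →₀ ℕ) → Prop)
    (hlin : IsLinearOrder (Fin d →₀ ℕ) le)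
    (hdeg : ∀ t₁ t₂, le t₁ t₂ → (∑ i, t₁ i) ≤ (∑ i, t₂ i))
    (Ω : Finset (Fin d → K)) (n : ℕ)
    (hsurj : ∀ v : Ω → K, ∃ p : MvPolynomial (Fin d) K,
      p.totalDegree ≤ n ∧ ∀ x : Ω, MvPolynomial.eval (x : Fin d → K) p = v x)
    (t : Fin d →₀ ℕ)
    (ht : ∀ p : MvPolynomial (Fin d) K, p ≠ 0 →
      (∀ x ∈ Ω, MvPolynomial.eval x p = 0) → ¬ IsLeadingTerm le p t) :
    (∑ i, t i) ≤ n := by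
  by_contra! hgt
  obtain ⟨p, hpdeg, hpΩ⟩ := hsurj fun x => eval (x : Fin d → K) (monomial t 1)
  have hlead : IsLeadingTerm le (monomial t 1 - p) t :=
    isLeadingTerm_monomial_sub hlin.toTotal
      (fun t₁ t₂ h => by simpa only [Finsupp.degree_eq_sum] using hdeg t₁ t₂ h) one_ne_zero
      (hpdeg.trans_lt (by rwa [Finsupp.degree_eq_sum]))
  have hvanish : ∀ x ∈ Ω, eval x (monomial t 1 - p) = 0 := fun x hx => by
    rw [map_sub, hpΩ ⟨x, hx⟩, sub_self]
  exact ht _ (fun h => by simpa [h] using hlead.1) hvanish hlead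

/-- **Lemma 2.2.** Let `le` be a degree compatible term order, `Ω ⊂ K^d` finite, and
`n` such that the evaluation homomorphism `A_n^Ω : Π_n → K^Ω` is surjective. Then every
term in the normal set of the vanishing ideal `I(Ω)` has total degree at most `n`. -/
theorem normal_set_subset_Pi_n
    {K : Type*} [Field K] {d : ℕ}
    (le : (Fin d →₀ ℕ) → (Fin d →₀ ℕ) → Prop)
    (hlin : IsLinearOrder (Fin d →₀ ℕ) le)
    (hone : ∀ t, le 0 t)
    (hmul : ∀ t₁ t₂ t₃, le t₁ t₂ → le (t₁ + t₃) (t₂ + t₃))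
    (hdeg : ∀ t₁ t₂, le t₁ t₂ → (∑ i, t₁ i) ≤ (∑ i, t₂ i))
    (Ω : Finset (Fin d → K)) (n : ℕ)
    (hsurj : ∀ v : Ω → K, ∃ p : MvPolynomial (Fin d) K,
      p.totalDegree ≤ n ∧ ∀ x : Ω, MvPolynomial.eval (x : Fin d → K) p = v x)
    (t : Fin d →₀ ℕ)
    (ht : ∀ p : MvPolynomial (Fin d) K, p ≠ 0 →
      (∀ x ∈ Ω, MvPolynomial.eval x p = 0) → ¬ IsLeadingTerm le p t) :
    (∑ i, t i) ≤ n :=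
  normal_set_subset_Pi_n_general le hlin hdeg Ω n hsurj t ht
end

section
/- Let Ω ⊂ K^d be a nonempty finite set and n ∈ ℕ₀ such that the evaluation homomorphism A_n^Ω : Π_n → K^Ω, p ↦ (p(x))_{x∈Ω}, is surjective. Then Ω = V(I_{n+1}(Ω)); that is, Ω equals the set of common zeros in K^d of all polynomials of total degree at most n+1 that vanish on Ω. -/
/-- **Theorem 2.3.** Let `Ω ⊂ K^d` be a nonempty finite set and `n` such that the
evaluation homomorphism `A_n^Ω : Π_n → K^Ω` is surjective. Then `Ω = V(I_{n+1}(Ω))`: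
`Ω` equals the set of common zeros of all polynomials of total degree at most `n+1`
that vanish on `Ω`. -/
theorem points_eq_zero_locus_of_surjective_evaluation
    {K : Type*} [Field K] {d : ℕ}
    (Ω : Finset (Fin d → K)) (hΩ : Ω.Nonempty) (n : ℕ)
    (hsurj : ∀ v : Ω → K, ∃ p : MvPolynomial (Fin d) K,
      p.totalDegree ≤ n ∧ ∀ x : Ω, MvPolynomial.eval (x : Fin d → K) p = v x) :
    (↑Ω : Set (Fin d → K)) =
      {x : Fin d → K | ∀ p : MvPolynomial (Fin d) K, p.totalDegree ≤ n + 1 →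
        (∀ y ∈ Ω, MvPolynomial.eval y p = 0) → MvPolynomial.eval x p = 0} := by
  classical
  ext x
  simp only [Set.mem_setOf_eq, Finset.mem_coe]
  constructor
  · intro hx p _ hvan
    exact hvan x hx
  · intro H
    by_contra hx
    have hq : ∀ y : Ω, ∃ q : MvPolynomial (Fin d) K, q.totalDegree ≤ n ∧
        ∀ z : Ω, MvPolynomial.eval (z : Fin d → K) q = if z = y then 1 else 0 :=
      fun y => hsurj (fun z => if z = y then 1 else 0)
    choose q hqdeg hqeval using hq
    have hc : ∀ y : Ω, MvPolynomial.eval x (q y) = 0 := by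
      intro y
      have hxy : x ≠ (y : Fin d → K) := fun h => hx (h ▸ y.2)
      obtain ⟨i, hi⟩ : ∃ i, x i ≠ (y : Fin d → K) i := by
        by_contra h; push_neg at h; exact hxy (funext h)
      set p := (MvPolynomial.X i - MvPolynomial.C ((y : Fin d → K) i)) * q y with hp
      have hdeg : p.totalDegree ≤ n + 1 := by
        calc p.totalDegree ≤ _ + _ := MvPolynomial.totalDegree_mul _ _
          _ ≤ 1 + n := by
              gcongr
              · exact le_trans (MvPolynomial.totalDegree_sub _ _)
                  (by simp [MvPolynomial.totalDegree_X])
              · exact hqdeg y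
          _ = n + 1 := by ring
      have hvan : ∀ z ∈ Ω, MvPolynomial.eval z p = 0 := by
        intro z hz
        have he := hqeval y ⟨z, hz⟩
        by_cases h : (⟨z, hz⟩ : Ω) = y
        · have hzy : z = (y : Fin d → K) := congrArg Subtype.val h
          simp [hp, hzy]
        · simp only [h, if_neg, if_false] at he
          simp [hp, he]
      have h0 := H p hdeg hvan
      simp only [hp, map_mul, map_sub, MvPolynomial.eval_X, MvPolynomial.eval_C,
        mul_eq_zero, sub_eq_zero] at h0
      rcases h0 with h0 | h0
      · exact absurd h0 hi
      · exact h0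
    have hs : (∑ y : Ω, q y).totalDegree ≤ n :=
      le_trans (MvPolynomial.totalDegree_finset_sum _ _) (Finset.sup_le fun y _ => hqdeg y)
    set p := (1 : MvPolynomial (Fin d) K) - ∑ y : Ω, q y with hp
    have hdeg : p.totalDegree ≤ n + 1 := by
      refine le_trans (MvPolynomial.totalDegree_sub _ _) ?_
      simp only [max_le_iff]
      exact ⟨by simp, le_trans hs (Nat.le_succ n)⟩
    have hvan : ∀ z ∈ Ω, MvPolynomial.eval z p = 0 := by
      intro z hz
      have : (∑ y : Ω, MvPolynomial.eval z (q y)) = 1 := by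
        have : ∀ y : Ω, MvPolynomial.eval z (q y) = if (⟨z, hz⟩ : Ω) = y then 1 else 0 :=
          fun y => hqeval y ⟨z, hz⟩
        simp [this]
      simp [hp, map_sum, ← Finset.univ_eq_attach, this]
    have h0 := H p hdeg hvan
    simp [hp, map_sum, hc] at h0
end

section
/- Let f : ℕ₀^d → K be an M-sparse d-variate exponential sum with nonzero coefficients a_1,…,a_M ∈ K and pairwise distinct parameters x_1,…,x_M ∈ K^d, and for n ∈ ℕ₀ let H_n = (f(k+ℓ))_{k,ℓ∈ℕ₀^d, |k|,|ℓ|≤n} and A_n = (x_j^k)_{j=1,…,M; |k|≤n}. Then for every n ∈ ℕ: rank(H_n) = rank(H_{n+1}) = M if and only if rank(A_n) = M. -/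
open Matrix

/-- The index set of multi-indices `k ∈ ℕ₀^d` with `|k| = k_1 + ⋯ + k_d ≤ n`,
realized as a finite type. -/
abbrev MIdx (d n : ℕ) := {k : Fin d → Fin (n + 1) // ∑ i, (k i : ℕ) ≤ n}

/-- The moment matrix `H_n = (f(k+ℓ))_{|k|,|ℓ| ≤ n}` of `f : ℕ₀^d → K`. -/
def momentMatrix {K : Type*} [Field K] {d : ℕ} (f : (Fin d → ℕ) → K) (n : ℕ) :
    Matrix (MIdx d n) (MIdx d n) K :=
  Matrix.of fun k ℓ => f fun i => (k.1 i : ℕ) + (ℓ.1 i : ℕ)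

/-- The multivariate Vandermonde matrix `A_n = (x_j^k)_{j=1,…,M; |k| ≤ n}`. -/
def vandermondeMatrix {K : Type*} [Field K] {d M : ℕ} (x : Fin M → Fin d → K) (n : ℕ) :
    Matrix (Fin M) (MIdx d n) K :=
  Matrix.of fun j k => ∏ i, x j i ^ (k.1 i : ℕ)

/-- Factorization `H_n = A_nᵀ * D * A_n`. -/
lemma momentMatrix_factor {K : Type*} [Field K] {d M : ℕ}
    (a : Fin M → K) (x : Fin M → Fin d → K)
    (f : (Fin d → ℕ) → K)
    (hf : ∀ k : Fin d → ℕ, f k = ∑ j, a j * ∏ i, x j i ^ k i)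
    (n : ℕ) :
    momentMatrix f n =
      (vandermondeMatrix x n)ᵀ * (Matrix.diagonal a * vandermondeMatrix x n) := by
  ext k ℓ
  simp only [momentMatrix, vandermondeMatrix, Matrix.mul_apply, Matrix.transpose_apply,
    Matrix.diagonal_apply, Matrix.of_apply, hf, ite_mul, zero_mul, Finset.sum_ite_eq,
    Finset.mem_univ, if_true]
  refine Finset.sum_congr rfl fun j _ => ?_
  have : (∏ i, x j i ^ ((k.1 i : ℕ) + (ℓ.1 i : ℕ)))
      = (∏ i, x j i ^ (k.1 i : ℕ)) * ∏ i, x j i ^ (ℓ.1 i : ℕ) := by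
    rw [← Finset.prod_mul_distrib]
    exact Finset.prod_congr rfl fun i _ => pow_add _ _ _
  rw [this]; ring

lemma diagonal_rank {K : Type*} [Field K] {M : ℕ}
    (a : Fin M → K) (ha : ∀ j, a j ≠ 0) : (Matrix.diagonal a).rank = M := by
  have hdet : IsUnit (Matrix.diagonal a).det := by
    rw [Matrix.det_diagonal]
    exact isUnit_iff_ne_zero.mpr (Finset.prod_ne_zero_iff.mpr fun j _ => ha j)
  rw [Matrix.rank_of_isUnit _ ((Matrix.isUnit_iff_isUnit_det _).mpr hdet)]
  simp

/-- If the Vandermonde matrix has full rank `M`, then so does the moment matrix. -/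
lemma moment_rank_of_vandermonde {K : Type*} [Field K] {d M : ℕ}
    (a : Fin M → K) (ha : ∀ j, a j ≠ 0)
    (x : Fin M → Fin d → K)
    (f : (Fin d → ℕ) → K)
    (hf : ∀ k : Fin d → ℕ, f k = ∑ j, a j * ∏ i, x j i ^ k i)
    (n : ℕ) (hA : (vandermondeMatrix x n).rank = M) :
    (momentMatrix f n).rank = M := by
  set A := vandermondeMatrix x n with hAdef
  have hfac := momentMatrix_factor a x f hf n
  have hle : (momentMatrix f n).rank ≤ M := by
    rw [hfac]
    calc (Aᵀ * (Matrix.diagonal a * A)).rank ≤ (Matrix.diagonal a * A).rank :=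
          Matrix.rank_mul_le_right _ _
      _ ≤ A.rank := Matrix.rank_mul_le_right _ _
      _ = M := hA
  -- A has full row rank, hence a right inverse B with A * B = 1
  have hsurj : LinearMap.range A.mulVecLin = ⊤ := by
    apply Submodule.eq_top_of_finrank_eq
    rw [← Matrix.rank, hA]
    simp [Module.finrank_pi]
  obtain ⟨g, hg⟩ := A.mulVecLin.exists_rightInverse_of_surjective hsurj
  set B := LinearMap.toMatrix' g with hB
  have hAB : A * B = 1 := by
    apply Matrix.toLin'.injective
    rw [Matrix.toLin'_mul, hB, Matrix.toLin'_toMatrix', Matrix.toLin'_one]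
    exact hg
  have hD : Bᵀ * (momentMatrix f n * B) = Matrix.diagonal a := by
    rw [hfac]
    have h2 : Bᵀ * ((Aᵀ * (Matrix.diagonal a * A)) * B)
        = (A * B)ᵀ * (Matrix.diagonal a * (A * B)) := by
      simp only [Matrix.transpose_mul, Matrix.mul_assoc]
    rw [h2, hAB]
    simp
  have hge : M ≤ (momentMatrix f n).rank := by
    calc M = (Matrix.diagonal a).rank := (diagonal_rank a ha).symm
      _ = (Bᵀ * (momentMatrix f n * B)).rank := by rw [hD]
      _ ≤ (momentMatrix f n * B).rank := Matrix.rank_mul_le_right _ _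
      _ ≤ (momentMatrix f n).rank := Matrix.rank_mul_le_left _ _
  exact le_antisymm hle hge

/-- The rank of the Vandermonde matrix is nondecreasing in `n`. -/
lemma vandermonde_rank_mono {K : Type*} [Field K] {d M : ℕ}
    (x : Fin M → Fin d → K) (n : ℕ) :
    (vandermondeMatrix x n).rank ≤ (vandermondeMatrix x (n + 1)).rank := by
  classical
  let e : MIdx d n → MIdx d (n + 1) := fun k =>
    ⟨fun i => (k.1 i).castSucc, by
      simpa using le_trans k.2 (Nat.le_succ n)⟩
  set S : Matrix (MIdx d (n + 1)) (MIdx d n) K :=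
    Matrix.of fun k' k => if e k = k' then 1 else 0 with hS
  have hfac : vandermondeMatrix x n = vandermondeMatrix x (n + 1) * S := by
    ext j k
    simp only [Matrix.mul_apply, hS, Matrix.of_apply, mul_ite, mul_one, mul_zero,
      Finset.sum_ite_eq, Finset.mem_univ, if_true]
    rfl
  rw [hfac]
  exact Matrix.rank_mul_le_left _ _

/-- **(Remark 2.4, flat extension.)** Let `f` be an `M`-sparse `d`-variate exponential sum
with nonzero coefficients `a_j` and pairwise distinct parameters `x_j`. For every `n ∈ ℕ`:
`rank H_n = rank H_{n+1} = M` if and only if `rank A_n = M`. -/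
theorem flat_extension_iff_vandermonde_full_rank
    {K : Type*} [Field K] {d M : ℕ}
    (a : Fin M → K) (ha : ∀ j, a j ≠ 0)
    (x : Fin M → Fin d → K) (hx : Function.Injective x)
    (f : (Fin d → ℕ) → K)
    (hf : ∀ k : Fin d → ℕ, f k = ∑ j, a j * ∏ i, x j i ^ k i)
    (n : ℕ) (hn : 0 < n) :
    ((momentMatrix f n).rank = M ∧ (momentMatrix f (n + 1)).rank = M) ↔
      (vandermondeMatrix x n).rank = M := by
  constructor
  · rintro ⟨h1, -⟩
    have hub : (vandermondeMatrix x n).rank ≤ M := by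
      simpa using (vandermondeMatrix x n).rank_le_card_height
    have hlb : M ≤ (vandermondeMatrix x n).rank := by
      have key : (momentMatrix f n).rank ≤ (vandermondeMatrix x n).rank := by
        rw [momentMatrix_factor a x f hf n]
        calc ((vandermondeMatrix x n)ᵀ * (Matrix.diagonal a * vandermondeMatrix x n)).rank
            ≤ (Matrix.diagonal a * vandermondeMatrix x n).rank := Matrix.rank_mul_le_right _ _
          _ ≤ (vandermondeMatrix x n).rank := Matrix.rank_mul_le_right _ _
      exact h1 ▸ key
    exact le_antisymm hub hlb
  · intro hA
    have hA' : (vandermondeMatrix x (n + 1)).rank = M := by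
      have hub : (vandermondeMatrix x (n + 1)).rank ≤ M := by
        simpa using (vandermondeMatrix x (n + 1)).rank_le_card_height
      refine le_antisymm hub ?_
      calc M = (vandermondeMatrix x n).rank := hA.symm
        _ ≤ (vandermondeMatrix x (n + 1)).rank := vandermonde_rank_mono x n
    exact ⟨moment_rank_of_vandermonde a ha x f hf n hA,
      moment_rank_of_vandermonde a ha x f hf (n + 1) hA'⟩
end

section
/- Let V ⊂ K^d, let Ω be a nonempty finite subset of V, and let n ∈ ℕ₀ be such that the evaluation map A_{V,n}^Ω : Π_{V,n} → K^Ω is surjective (equivalently: every function Ω → K is the restriction of a polynomial of total degree at most n). Then Ω = V_V(I_{V,n+1}(Ω)); concretely, Ω = { a ∈ V : p(a) = 0 for every polynomial p of total degree at most n+1 that vanishes on Ω }. -/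
/-- **Corollary 3.6.** Let `V ⊂ K^d`, let `Ω` be a nonempty finite subset of `V`, and let
`n ∈ ℕ₀` be such that the induced evaluation map `A_{V,n}^Ω : Π_{V,n} → K^Ω` is surjective
(equivalently, every function `Ω → K` is the restriction of a polynomial of total degree
at most `n`). Then `Ω = V_V(I_{V,n+1}(Ω))`; concretely, `Ω` equals the set of points of
`V` at which every polynomial of total degree at most `n+1` vanishing on `Ω` vanishes. -/
theorem points_eq_relative_zero_locus_of_surjective_evaluation
    {K : Type*} [Field K] {d : ℕ}
    (V : Set (Fin d → K)) (Ω : Finset (Fin d → K)) (hne : Ω.Nonempty)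
    (hΩV : (↑Ω : Set (Fin d → K)) ⊆ V) (n : ℕ)
    (hsurj : ∀ v : Ω → K, ∃ p : MvPolynomial (Fin d) K,
      p.totalDegree ≤ n ∧ ∀ x : Ω, MvPolynomial.eval (x : Fin d → K) p = v x) :
    (↑Ω : Set (Fin d → K)) =
      {a ∈ V | ∀ p : MvPolynomial (Fin d) K, p.totalDegree ≤ n + 1 →
        (∀ y ∈ Ω, MvPolynomial.eval y p = 0) → MvPolynomial.eval a p = 0} := by
  ext a
  simp only [Set.mem_setOf_eq, Finset.mem_coe]
  constructor
  · intro ha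
    exact ⟨hΩV ha, fun p _ hvan => hvan a ha⟩
  · rintro ⟨haV, h⟩
    classical
    -- indicator interpolants
    choose p hdeg hval using fun y : Ω =>
      hsurj (fun x => if (x : Fin d → K) = (y : Fin d → K) then 1 else 0)
    set c : Ω → K := fun y => MvPolynomial.eval a (p y) with hc
    -- fact 1 : ∑ c y = 1
    have hsum : ∑ y : Ω, c y = 1 := by
      have hq : MvPolynomial.eval a ((∑ y : Ω, p y) - 1) = 0 := by
        apply h
        · refine le_trans (MvPolynomial.totalDegree_sub _ _) ?_
          simp only [MvPolynomial.totalDegree_one]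
          refine max_le ?_ (by omega)
          refine le_trans (MvPolynomial.totalDegree_finset_sum _ _) ?_
          exact le_trans (Finset.sup_le fun y _ => hdeg y) (by omega)
        · intro z hz
          have : ∀ y : Ω, MvPolynomial.eval z (p y)
              = if z = (y : Fin d → K) then 1 else 0 := fun y => hval y ⟨z, hz⟩
          simp only [map_sub, map_sum, map_one, this]
          rw [sub_eq_zero, Finset.sum_coe_sort Ω (fun y => if z = y then (1:K) else 0)]
          simp [Finset.sum_ite_eq, hz]
      simpa [sub_eq_zero, c] using hq
    -- fact 2 : (a i - y i) * c y = 0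
    have hkill : ∀ (y : Ω) (i : Fin d), (a i - (y : Fin d → K) i) * c y = 0 := by
      intro y i
      have hq : MvPolynomial.eval a
          ((MvPolynomial.X i - MvPolynomial.C ((y : Fin d → K) i)) * p y) = 0 := by
        apply h
        · refine le_trans (MvPolynomial.totalDegree_mul _ _) ?_
          have h1 : (MvPolynomial.X i - MvPolynomial.C ((y : Fin d → K) i) :
              MvPolynomial (Fin d) K).totalDegree ≤ 1 := by
            refine le_trans (MvPolynomial.totalDegree_sub _ _) ?_
            simp [MvPolynomial.totalDegree_X, MvPolynomial.totalDegree_C]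
          have := hdeg y
          omega
        · intro z hz
          have hz' := hval y ⟨z, hz⟩
          simp only [map_mul, map_sub, MvPolynomial.eval_X, MvPolynomial.eval_C]
          by_cases hzy : z = (y : Fin d → K)
          · simp [hzy]
          · rw [if_neg hzy] at hz'
            simp [hz']
      simpa [c] using hq
    -- conclude
    have hne0 : ∃ y : Ω, c y ≠ 0 := by
      by_contra hall
      push_neg at hall
      simp [hall] at hsum
    obtain ⟨y, hy⟩ := hne0
    have : a = (y : Fin d → K) := by
      funext i
      have := hkill y i
      rcases mul_eq_zero.mp this with h' | h'
      · linear_combination h'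
      · exact absurd h' hy
    rw [this]; exact y.2
end

section
/- Let d ≥ 2. There is no term order ≤ on the monoid of d-variate terms that is maxdeg-compatible, i.e., no term order such that t₁ ≤ t₂ implies maxdeg(t₁) ≤ maxdeg(t₂) for all terms t₁, t₂, where maxdeg(X^k) = max{k_1,…,k_d}. -/
/-! If `X_u ≤ X_v` for two distinct variables, multiplying by `X_u` gives `X_u² ≤ X_u X_v`,
although `maxdeg (X_u²) = 2 > 1 = maxdeg (X_u X_v)`. By totality one of `X_u ≤ X_v`,
`X_v ≤ X_u` holds, so no term order can be maxdeg-compatible. -/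

open Finset Finsupp

section Maxdeg

variable {ι : Type*} [Fintype ι]

def maxdeg (t : ι →₀ ℕ) : ℕ := univ.sup fun i => t i

theorem le_maxdeg (t : ι →₀ ℕ) (i : ι) : t i ≤ maxdeg t :=
  le_sup (f := fun i => t i) (mem_univ i)

theorem maxdeg_le_iff {t : ι →₀ ℕ} {n : ℕ} : maxdeg t ≤ n ↔ ∀ i, t i ≤ n := by
  simp [maxdeg, Finset.sup_le_iff]

theorem maxdeg_single (u : ι) (n : ℕ) : maxdeg (single u n) = n := by
  refine le_antisymm (maxdeg_le_iff.mpr fun i => ?_) (by simpa using le_maxdeg (single u n) u)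
  by_cases h : i = u
  · simp [h]
  · simp [single_eq_of_ne h]

theorem maxdeg_single_add_single_of_ne {u v : ι} (huv : u ≠ v) (m n : ℕ) :
    maxdeg (single u m + single v n) = max m n := by
  refine le_antisymm (maxdeg_le_iff.mpr fun i => ?_) (max_le ?_ ?_)
  · by_cases hu : i = u
    · simp [hu, single_eq_of_ne huv]
    · by_cases hv : i = v
      · simp [hv, single_eq_of_ne' huv]
      · simp [single_eq_of_ne hu, single_eq_of_ne hv]
  · simpa [single_eq_of_ne huv] using le_maxdeg (single u m + single v n) u
  · simpa [single_eq_of_ne' huv] using le_maxdeg (single u m + single v n) v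

theorem not_le_single_of_maxdeg_mono {le : (ι →₀ ℕ) → (ι →₀ ℕ) → Prop}
    (hmul : ∀ t₁ t₂ t₃, le t₁ t₂ → le (t₁ + t₃) (t₂ + t₃))
    (hmono : ∀ t₁ t₂, le t₁ t₂ → maxdeg t₁ ≤ maxdeg t₂) {u v : ι} (huv : u ≠ v) :
    ¬ le (single u 1) (single v 1) := by
  intro h
  have hsq := hmono _ _ (hmul _ _ (single u 1) h)
  rw [← single_add, maxdeg_single, maxdeg_single_add_single_of_ne (Ne.symm huv)] at hsq
  simp at hsq

end Maxdeg

theorem no_maxdeg_compatible_term_order_general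
    {d : ℕ} (hd : 2 ≤ d)
    (le : (Fin d →₀ ℕ) → (Fin d →₀ ℕ) → Prop)
    (hlin : IsLinearOrder (Fin d →₀ ℕ) le)
    (hmul : ∀ t₁ t₂ t₃, le t₁ t₂ → le (t₁ + t₃) (t₂ + t₃)) :
    ¬ (∀ t₁ t₂, le t₁ t₂ → (Finset.univ.sup fun i => t₁ i) ≤ Finset.univ.sup fun i => t₂ i) := by
  intro hmono
  let x : Fin d := ⟨0, by omega⟩
  let y : Fin d := ⟨1, by omega⟩
  have hxy : x ≠ y := by simp [x, y, Fin.ext_iff]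
  rcases hlin.toTotal.total (single x 1) (single y 1) with h | h
  · exact not_le_single_of_maxdeg_mono hmul hmono hxy h
  · exact not_le_single_of_maxdeg_mono hmul hmono hxy.symm h

/-- **(Remark, Section 3.2.)** For `d ≥ 2` there is no maxdeg-compatible term order on the
monoid of `d`-variate terms: no term order `le` satisfies that `le t₁ t₂` implies
`maxdeg t₁ ≤ maxdeg t₂`, where `maxdeg (X^k) = max {k_1, …, k_d}`. -/
theorem no_maxdeg_compatible_term_order
    {d : ℕ} (hd : 2 ≤ d)
    (le : (Fin d →₀ ℕ) → (Fin d →₀ ℕ) → Prop)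
    (hlin : IsLinearOrder (Fin d →₀ ℕ) le)
    (hone : ∀ t, le 0 t)
    (hmul : ∀ t₁ t₂ t₃, le t₁ t₂ → le (t₁ + t₃) (t₂ + t₃)) :
    ¬ (∀ t₁ t₂, le t₁ t₂ → (Finset.univ.sup fun i => t₁ i) ≤ Finset.univ.sup fun i => t₂ i) :=
  no_maxdeg_compatible_term_order_general hd le hlin hmul
end

section
/- Let t_1,…,t_M ∈ [0,1)^d be pairwise distinct, let Ω = { (e^{2πi t_{j,1}},…,e^{2πi t_{j,d}}) : j = 1,…,M } ⊂ 𝕋^d ⊂ ℂ^d, and let n ∈ ℕ₀ be such that the Fourier–Vandermonde matrix F_n = (e^{2πi k·t_j})_{j=1,…,M; k∈{0,…,n}^d} ∈ ℂ^{M×(n+1)^d} has full rank M. Then Ω = V(ker F_{dn+1}); that is, Ω equals the set of points z ∈ ℂ^d at which every polynomial p(z) = Σ_{k∈{0,…,dn+1}^d} c_k z^k, whose coefficient vector c lies in the kernel of F_{dn+1}, vanishes (equivalently, every such polynomial vanishing on Ω vanishes only on Ω among points of ℂ^d). -/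
open Matrix

/-- The multivariate Vandermonde (nonequispaced Fourier) matrix
`F_m = (e^{2πi k·t_j})_{j=1,…,M; k∈{0,…,m}^d}`. -/
noncomputable def fourierMatrix {M : ℕ} (d : ℕ) (t : Fin M → Fin d → ℝ) (m : ℕ) :
    Matrix (Fin M) (Fin d → Fin (m + 1)) ℂ :=
  Matrix.of fun j k =>
    Complex.exp (2 * Real.pi * Complex.I * ∑ i, ((k i : ℕ) : ℂ) * (t j i : ℂ))

/-- The point `e^{2πi t_j}` on the torus. -/
noncomputable def torusPoint {M d : ℕ} (t : Fin M → Fin d → ℝ) (j : Fin M) (i : Fin d) : ℂ :=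
  Complex.exp (2 * Real.pi * Complex.I * (t j i : ℂ))

lemma fourierMatrix_apply {M : ℕ} (d : ℕ) (t : Fin M → Fin d → ℝ) (m : ℕ)
    (j : Fin M) (k : Fin d → Fin (m + 1)) :
    fourierMatrix d t m j k = ∏ i, torusPoint t j i ^ (k i : ℕ) := by
  unfold fourierMatrix torusPoint
  rw [Matrix.of_apply, Finset.mul_sum, Complex.exp_sum]
  refine Finset.prod_congr rfl fun i _ => ?_
  rw [show 2 * Real.pi * Complex.I * (((k i : ℕ) : ℂ) * (t j i : ℂ))
      = ((k i : ℕ) : ℂ) * (2 * Real.pi * Complex.I * (t j i : ℂ)) by ring,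
    Complex.exp_nat_mul]

/-- **Lemma 3.8.** Let `Ω = {e^{2πi t_j} : j = 1,…,M} ⊂ 𝕋^d` with pairwise distinct
`t_j ∈ [0,1)^d` and let `n ∈ ℕ₀` be such that `F_n` has full rank `M`. Then
`Ω = V(ker F_{dn+1})`: `Ω` equals the set of common zeros in `ℂ^d` of the polynomials
`p_c(z) = ∑_{k∈{0,…,dn+1}^d} c_k z^k` over all `c` in the kernel of `F_{dn+1}`. -/
theorem torus_points_eq_zero_locus_of_fourier_kernel
    {d M : ℕ} (hd : 0 < d) (t : Fin M → Fin d → ℝ)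
    (ht01 : ∀ j i, t j i ∈ Set.Ico (0 : ℝ) 1)
    (hdist : Function.Injective t)
    (n : ℕ) (hrank : (fourierMatrix d t n).rank = M) :
    (Set.range fun j => fun i => Complex.exp (2 * Real.pi * Complex.I * (t j i : ℂ))) =
      {z : Fin d → ℂ | ∀ c : (Fin d → Fin (d * n + 1 + 1)) → ℂ,
        fourierMatrix d t (d * n + 1) *ᵥ c = 0 →
        ∑ k, c k * ∏ i, z i ^ (k i : ℕ) = 0} := by
  classical
  have hnle : n ≤ d * n := Nat.le_mul_of_pos_left n hd
  ext z
  simp only [Set.mem_range, Set.mem_setOf_eq]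
  constructor
  · -- easy direction: points of Ω are common zeros
    rintro ⟨j, rfl⟩ c hc
    have h0 : (fourierMatrix d t (d * n + 1) *ᵥ c) j = 0 := by rw [hc]; rfl
    rw [Matrix.mulVec, dotProduct] at h0
    rw [← h0]
    refine Finset.sum_congr rfl fun k _ => ?_
    rw [fourierMatrix_apply, mul_comm]
    rfl
  · -- hard direction
    intro hz
    -- surjectivity of c ↦ F_n c
    have hsurj : ∀ u : Fin M → ℂ, ∃ c, fourierMatrix d t n *ᵥ c = u := by
      intro u
      have htop : LinearMap.range (fourierMatrix d t n).mulVecLin = ⊤ := by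
        apply Submodule.eq_top_of_finrank_eq
        rw [Module.finrank_fin_fun]
        exact hrank
      have hu : u ∈ LinearMap.range (fourierMatrix d t n).mulVecLin := by
        rw [htop]; trivial
      obtain ⟨c, hc⟩ := hu
      exact ⟨c, by simpa [Matrix.mulVecLin_apply] using hc⟩
    -- Lagrange coefficient vectors
    choose L hL using fun j => hsurj (Pi.single j 1)
    -- left kernel of F_n is trivial
    have hinj : ∀ b : Fin M → ℂ,
        (∀ k : Fin d → Fin (n + 1), ∑ j, b j * fourierMatrix d t n j k = 0) → b = 0 := by
      intro b hb
      have hker : (fourierMatrix d t n)ᵀ.mulVecLin b = 0 := by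
        funext k
        have := hb k
        simp only [Matrix.mulVecLin_apply, Matrix.mulVec, dotProduct,
          Matrix.transpose_apply, Pi.zero_apply]
        rw [← this]
        exact Finset.sum_congr rfl fun j _ => mul_comm _ _
      have hkerbot : LinearMap.ker (fourierMatrix d t n)ᵀ.mulVecLin = ⊥ := by
        have h1 := LinearMap.finrank_range_add_finrank_ker (fourierMatrix d t n)ᵀ.mulVecLin
        have h2 : Module.finrank ℂ
            (LinearMap.range (fourierMatrix d t n)ᵀ.mulVecLin) = M := by
          have := (fourierMatrix d t n).rank_transpose
          rw [hrank] at this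
          exact this
        rw [h2, Module.finrank_fin_fun] at h1
        have h3 : Module.finrank ℂ
            (LinearMap.ker (fourierMatrix d t n)ᵀ.mulVecLin) = 0 := by omega
        exact Submodule.finrank_eq_zero.mp h3
      have hbmem : b ∈ LinearMap.ker (fourierMatrix d t n)ᵀ.mulVecLin := hker
      rw [hkerbot] at hbmem
      exact hbmem
    -- the coefficients a j = ℓ_j(z)
    set a : Fin M → ℂ :=
      fun j => ∑ k : Fin d → Fin (n + 1), (∏ i, z i ^ (k i : ℕ)) * L j k with ha
    -- key identity: z^{k0} = ∑ j, a j ω_j^{k0} for all small k0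
    have key : ∀ k0 : Fin d → ℕ, (∀ i, k0 i < d * n + 1 + 1) →
        ∏ i, z i ^ k0 i = ∑ j, a j * ∏ i, torusPoint t j i ^ k0 i := by
      intro k0 hk0
      set K0 : Fin d → Fin (d * n + 1 + 1) := fun i => ⟨k0 i, hk0 i⟩ with hK0
      have hembv : ∀ k : Fin (n + 1), (k : ℕ) < d * n + 1 + 1 := by
        intro k; have := k.isLt; omega
      set emb : (Fin d → Fin (n + 1)) → (Fin d → Fin (d * n + 1 + 1)) :=
        fun k i => ⟨k i, hembv (k i)⟩ with hemb
      set P : Fin M → ℂ := fun j => ∏ i, torusPoint t j i ^ k0 i with hP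
      set v : (Fin d → Fin (n + 1)) → ℂ := fun k' => ∑ j, P j * L j k' with hv
      set c : (Fin d → Fin (d * n + 1 + 1)) → ℂ :=
        fun k => (if K0 = k then 1 else 0) - ∑ k', (if emb k' = k then v k' else 0) with hc
      have keyw : ∀ w : (Fin d → Fin (d * n + 1 + 1)) → ℂ,
          ∑ k, w k * c k = w K0 - ∑ k', w (emb k') * v k' := by
        intro w
        have h1 : ∀ k, w k * c k
            = (if K0 = k then w k else 0)
              - ∑ k', (if emb k' = k then w k * v k' else 0) := by
          intro k
          rw [hc]
          simp [mul_sub, Finset.mul_sum, mul_ite, mul_zero, mul_one]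
        rw [Finset.sum_congr rfl fun k _ => h1 k, Finset.sum_sub_distrib]
        congr 1
        · simp [Finset.sum_ite_eq]
        · rw [Finset.sum_comm]
          refine Finset.sum_congr rfl fun k' _ => ?_
          simp [Finset.sum_ite_eq]
      -- F_n j' (emb k') as F_{dn+1}
      have hembval : ∀ (j' : Fin M) (k' : Fin d → Fin (n + 1)),
          fourierMatrix d t (d * n + 1) j' (emb k') = fourierMatrix d t n j' k' := by
        intro j' k'; rfl
      -- the inner sum computations
      have hsumv : ∀ (g : (Fin d → Fin (n + 1)) → ℂ) (s : Fin M → ℂ),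
          (∀ j : Fin M, ∑ k', g k' * L j k' = s j) →
          ∑ k', g k' * v k' = ∑ j, P j * s j := by
        intro g s hs
        calc ∑ k', g k' * v k'
            = ∑ k', ∑ j, P j * (g k' * L j k') := by
              refine Finset.sum_congr rfl fun k' _ => ?_
              rw [hv, Finset.mul_sum]
              exact Finset.sum_congr rfl fun j _ => by ring
          _ = ∑ j, ∑ k', P j * (g k' * L j k') := Finset.sum_comm
          _ = ∑ j, P j * s j := by
              refine Finset.sum_congr rfl fun j _ => ?_
              rw [← hs j, Finset.mul_sum]
      have hFc : fourierMatrix d t (d * n + 1) *ᵥ c = 0 := by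
        funext j'
        have h2 : (fourierMatrix d t (d * n + 1) *ᵥ c) j'
            = ∑ k, fourierMatrix d t (d * n + 1) j' k * c k := rfl
        rw [h2, keyw, Pi.zero_apply]
        have h3 : ∑ k', fourierMatrix d t (d * n + 1) j' (emb k') * v k' = P j' := by
          have hs : ∀ j : Fin M,
              ∑ k', fourierMatrix d t (d * n + 1) j' (emb k') * L j k'
                = (Pi.single j 1 : Fin M → ℂ) j' := by
            intro j
            have := congr_fun (hL j) j'
            rw [Matrix.mulVec, dotProduct] at this
            rw [← this]
            exact Finset.sum_congr rfl fun k' _ => by rw [hembval]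
          rw [hsumv _ _ hs]
          simp [Pi.single_apply]
        rw [h3]
        rw [fourierMatrix_apply]
        have : ∏ i, torusPoint t j' i ^ ((K0 i : ℕ)) = P j' := rfl
        rw [this, sub_self]
      -- evaluate at z
      have h4 := hz c hFc
      have h5 : ∑ k, c k * ∏ i, z i ^ (k i : ℕ)
          = ∑ k, (∏ i, z i ^ (k i : ℕ)) * c k :=
        Finset.sum_congr rfl fun k _ => mul_comm _ _
      rw [h5, keyw] at h4
      have h6 : ∑ k', (∏ i, z i ^ ((emb k' i : ℕ))) * v k' = ∑ j, P j * a j := by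
        exact hsumv _ _ fun j => rfl
      rw [h6] at h4
      have h7 : (∏ i, z i ^ ((K0 i : ℕ))) = ∏ i, z i ^ k0 i := rfl
      rw [h7] at h4
      rw [sub_eq_zero] at h4
      rw [h4]
      exact Finset.sum_congr rfl fun j _ => mul_comm _ _
    -- the a's sum to 1
    have hsum1 : (1 : ℂ) = ∑ j, a j := by
      have := key (fun _ => 0) (fun i => Nat.succ_pos _)
      simpa using this
    -- some a is nonzero
    have hex : ∃ j0, a j0 ≠ 0 := by
      by_contra h
      push_neg at h
      rw [Finset.sum_eq_zero (fun j _ => h j)] at hsum1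
      exact one_ne_zero hsum1
    obtain ⟨j0, hj0⟩ := hex
    refine ⟨j0, ?_⟩
    funext i
    show torusPoint t j0 i = z i
    -- vector b lies in the left kernel
    have hb : (fun j => a j * (torusPoint t j i - z i)) = 0 := by
      apply hinj
      intro k
      have hbound : ∀ i' : Fin d,
          ((k i' : ℕ) + if i' = i then 1 else 0) < d * n + 1 + 1 := by
        intro i'
        have := (k i').isLt
        by_cases hii : i' = i <;> simp [hii] <;> omega
      have hbound2 : ∀ i' : Fin d, ((k i' : ℕ)) < d * n + 1 + 1 := by
        intro i'; have := (k i').isLt; omega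
      have e1 := key (fun i' => (k i' : ℕ) + if i' = i then 1 else 0) hbound
      have e2 := key (fun i' => (k i' : ℕ)) hbound2
      have hsplit : ∀ u : Fin d → ℂ,
          ∏ i', u i' ^ ((k i' : ℕ) + if i' = i then 1 else 0)
            = u i * ∏ i', u i' ^ (k i' : ℕ) := by
        intro u
        have h8 : ∀ i' : Fin d, u i' ^ ((k i' : ℕ) + if i' = i then 1 else 0)
            = u i' ^ (k i' : ℕ) * (if i' = i then u i' else 1) := by
          intro i'
          by_cases hii : i' = i <;> simp [hii, pow_add]
        rw [Finset.prod_congr rfl fun i' _ => h8 i', Finset.prod_mul_distrib,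
          Finset.prod_ite_eq', if_pos (Finset.mem_univ i)]
        ring
      have hstep : ∑ j, (a j * (torusPoint t j i - z i)) * fourierMatrix d t n j k
          = (∑ j, a j * ∏ i', torusPoint t j i' ^ ((k i' : ℕ) + if i' = i then 1 else 0))
            - z i * ∑ j, a j * ∏ i', torusPoint t j i' ^ (k i' : ℕ) := by
        rw [Finset.mul_sum, ← Finset.sum_sub_distrib]
        refine Finset.sum_congr rfl fun j _ => ?_
        rw [fourierMatrix_apply, hsplit (torusPoint t j)]
        ring
      rw [hstep, ← e1, ← e2, hsplit z]
      ring
    have := congr_fun hb j0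
    simp only [Pi.zero_apply, mul_eq_zero] at this
    rcases this with h | h
    · exact absurd h hj0
    · exact sub_eq_zero.mp h
end

section
/- Let Ω = {x_1,…,x_M} be a nonempty finite subset of the unit sphere S^{d−1} ⊂ ℝ^d and let n ∈ ℕ₀ be such that the evaluation map sending each real polynomial of total degree at most n to its restriction to Ω is surjective onto ℝ^Ω (equivalently, the spherical Vandermonde matrix Y_n has full rank M). Then Ω = { x ∈ S^{d−1} : p(x) = 0 for every real polynomial p of total degree at most n+1 that vanishes on Ω }; in the notation of the paper, Ω = V_{S^{d−1}}(ker Y_{n+1}). -/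
/-- **Lemma 3.13.** Let `Ω = {x_1,…,x_M}` be a nonempty finite subset of the unit sphere
`S^{d−1} ⊂ ℝ^d` and `n ∈ ℕ₀` such that the map sending each real polynomial of total
degree at most `n` to its restriction to `Ω` is surjective onto `ℝ^Ω`. Then `Ω` equals the
set of points of the sphere at which every real polynomial of total degree at most `n+1`
vanishing on `Ω` vanishes, i.e. `Ω = V_{S^{d−1}}(ker Y_{n+1})`. -/
theorem sphere_points_eq_relative_zero_locus
    {d : ℕ} (hd : 0 < d)
    (Ω : Finset (Fin d → ℝ)) (hne : Ω.Nonempty)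
    (hΩ : ∀ x ∈ Ω, ∑ i, x i ^ 2 = 1) (n : ℕ)
    (hsurj : ∀ v : Ω → ℝ, ∃ p : MvPolynomial (Fin d) ℝ,
      p.totalDegree ≤ n ∧ ∀ x : Ω, MvPolynomial.eval (x : Fin d → ℝ) p = v x) :
    (↑Ω : Set (Fin d → ℝ)) =
      {x : Fin d → ℝ | (∑ i, x i ^ 2 = 1) ∧
        ∀ p : MvPolynomial (Fin d) ℝ, p.totalDegree ≤ n + 1 →
          (∀ y ∈ Ω, MvPolynomial.eval y p = 0) → MvPolynomial.eval x p = 0} := by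
  ext x
  constructor
  · intro hx
    refine ⟨hΩ x hx, fun p _ hp => hp x hx⟩
  · rintro ⟨hx1, hx2⟩
    by_contra hxΩ
    -- For each y ∈ Ω, 1 - ⟨x, y⟩ ≠ 0
    have hkey : ∀ y ∈ Ω, (1 : ℝ) - ∑ i, x i * y i ≠ 0 := by
      intro y hy h
      apply hxΩ
      have hiy : (∑ i, x i * y i) = 1 := by linarith
      have hsum : (∑ i, (x i - y i) ^ 2) = 0 := by
        have h1 := hΩ y hy
        have : (∑ i, (x i - y i) ^ 2) =
            (∑ i, x i ^ 2) + (∑ i, y i ^ 2) - 2 * ∑ i, x i * y i := by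
          rw [← Finset.sum_add_distrib, Finset.mul_sum, ← Finset.sum_sub_distrib]
          apply Finset.sum_congr rfl
          intro i _
          ring
        rw [this, hx1, h1, hiy]; ring
      have hxy : x = y := by
        funext i
        have := (Finset.sum_eq_zero_iff_of_nonneg
          (fun i _ => sq_nonneg (x i - y i))).mp hsum i (Finset.mem_univ i)
        have := pow_eq_zero_iff (n := 2) (by norm_num) |>.mp this
        linarith
      simpa [hxy] using hy
    -- interpolate q on Ω
    obtain ⟨q, hqdeg, hqval⟩ := hsurj (fun y => ((1 : ℝ) - ∑ i, x (i) * (y : Fin d → ℝ) i)⁻¹)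
    set L : MvPolynomial (Fin d) ℝ :=
      MvPolynomial.C 1 - ∑ i, MvPolynomial.C (x i) * MvPolynomial.X i with hL
    have hLeval : ∀ z : Fin d → ℝ, MvPolynomial.eval z L = 1 - ∑ i, x i * z i := by
      intro z
      simp [hL]
    have hLdeg : L.totalDegree ≤ 1 := by
      rw [hL, sub_eq_add_neg]
      refine le_trans (MvPolynomial.totalDegree_add _ _) (max_le ?_ ?_)
      · simp [MvPolynomial.totalDegree_C]
      · rw [MvPolynomial.totalDegree_neg]
        refine le_trans (MvPolynomial.totalDegree_finset_sum _ _) ?_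
        apply Finset.sup_le
        intro i _
        refine le_trans (MvPolynomial.totalDegree_mul _ _) ?_
        simp [MvPolynomial.totalDegree_C, MvPolynomial.totalDegree_X]
    set p : MvPolynomial (Fin d) ℝ := MvPolynomial.C 1 - L * q with hp
    have hpdeg : p.totalDegree ≤ n + 1 := by
      rw [hp, sub_eq_add_neg]
      refine le_trans (MvPolynomial.totalDegree_add _ _) (max_le ?_ ?_)
      · simp [MvPolynomial.totalDegree_C]
      · rw [MvPolynomial.totalDegree_neg]
        refine le_trans (MvPolynomial.totalDegree_mul _ _) ?_
        omega
    have hpvan : ∀ y ∈ Ω, MvPolynomial.eval y p = 0 := by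
      intro y hy
      have hq := hqval ⟨y, hy⟩
      simp only [hp, map_sub, map_mul, map_one, MvPolynomial.eval_C]
      rw [hLeval, hq]
      rw [mul_inv_cancel₀ (hkey y hy)]
      ring
    have := hx2 p hpdeg hpvan
    rw [hp, map_sub, map_mul, MvPolynomial.eval_C, hLeval] at this
    have hx0 : (1 : ℝ) - ∑ i, x i * x i = 0 := by
      have : (∑ i, x i * x i) = ∑ i, x i ^ 2 := by
        apply Finset.sum_congr rfl; intro i _; ring
      rw [this, hx1]; ring
    rw [hx0] at this
    simp at this
end
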